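/- Let 0 < α < 1, λ ≥ 0, a > 0, and let f : [0,a] × ℝ → ℝ be continuous, bounded, and Lipschitz in the second variable with constant L < Γ(α+1)/(2 a^α e^{λa}). Then the integral equation y(t) = y_a e^{-λt} − (e^{-λt}/Γ(α))[∫₀ᵃ e^{λs}(a−s)^{α−1} f(s,y(s)) ds − ∫₀ᵗ e^{λs}(t−s)^{α−1} f(s,y(s)) ds] has a unique continuous solution y* in Ω_γ. -/

import Mathlib

/-!
Write `g_y(s) = e^{λs} f(s, y(s))` and `I^α h (t) = Γ(α)⁻¹ ∫₀ᵗ (t - s)^{α-1} h(s) ds`. The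
right-hand side of the equation is `(A y)(t) = e^{-λt} (y_a - I^α g_y (a) + I^α g_y (t))`. The
kernel integrates to `t^α / α`, so `|I^α h (t)| ≤ sup |h| · t^α / Γ(α+1)`; hence `A` is Lipschitz
for the sup norm with constant `2 L a^α e^{λa} / Γ(α+1) < 1`, and `A y` is within `γ` of
`y_a e^{-λt}` for every `y`, so the fixed point lies in `Ω_γ`. Because `α < 1` the kernel
decreases in `t`, which makes `I^α h` `α`-Hölder, so `A` preserves continuity and Banach's fixed
point theorem applies on `C([0,a])`.
-/

open Real Set MeasureTheory intervalIntegral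

section RiemannLiouville

variable {α : ℝ} {h : ℝ → ℝ}

noncomputable def riemannLiouville (α : ℝ) (h : ℝ → ℝ) (t : ℝ) : ℝ :=
  (Gamma α)⁻¹ * ∫ s in (0 : ℝ)..t, (t - s) ^ (α - 1) * h s

theorem intervalIntegrable_sub_rpow (hα : 0 < α) (w u v : ℝ) :
    IntervalIntegrable (fun s => (w - s) ^ (α - 1)) volume u v := by
  simpa using (intervalIntegrable_rpow' (a := w - u) (b := w - v)
    (by linarith : -1 < α - 1)).comp_sub_left w

theorem integral_sub_rpow (hα : 0 < α) (w u v : ℝ) :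
    ∫ s in u..v, (w - s) ^ (α - 1) = ((w - u) ^ α - (w - v) ^ α) / α := by
  rw [integral_comp_sub_left (fun x => x ^ (α - 1)) w,
    integral_rpow (Or.inl (by linarith)), sub_add_cancel]

theorem abs_integral_sub_rpow_mul_le (hα : 0 < α) {u v C : ℝ} (huv : u ≤ v)
    (hC : ∀ s ∈ Icc u v, |h s| ≤ C) :
    |∫ s in u..v, (v - s) ^ (α - 1) * h s| ≤ C * (v - u) ^ α / α := by
  have hbound : ∀ s ∈ Ioc u v, |(v - s) ^ (α - 1) * h s| ≤ C * (v - s) ^ (α - 1) := by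
    intro s hs
    have hk : 0 ≤ (v - s) ^ (α - 1) := rpow_nonneg (by linarith [hs.2]) _
    rw [abs_mul, abs_of_nonneg hk, mul_comm C]
    exact mul_le_mul_of_nonneg_left (hC s (Ioc_subset_Icc_self hs)) hk
  calc |∫ s in u..v, (v - s) ^ (α - 1) * h s|
      ≤ ∫ s in u..v, C * (v - s) ^ (α - 1) := by
        simpa only [Real.norm_eq_abs] using norm_integral_le_of_norm_le
          (f := fun s => (v - s) ^ (α - 1) * h s) huv (.of_forall hbound)
          ((intervalIntegrable_sub_rpow hα v u v).const_mul C)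
    _ = C * (v - u) ^ α / α := by
        rw [intervalIntegral.integral_const_mul, integral_sub_rpow hα, sub_self,
          zero_rpow hα.ne', sub_zero, mul_div_assoc]

theorem abs_integral_sub_rpow_sub_mul_le (hα0 : 0 < α) (hα1 : α < 1) {t₁ t₂ C : ℝ}
    (h0 : 0 ≤ t₁) (h12 : t₁ ≤ t₂) (hC : ∀ s ∈ Icc 0 t₁, |h s| ≤ C) :
    |∫ s in (0 : ℝ)..t₁, ((t₂ - s) ^ (α - 1) - (t₁ - s) ^ (α - 1)) * h s| ≤
      C * (t₂ - t₁) ^ α / α := by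
  have hbound : ∀ᵐ s, s ∈ Ioc 0 t₁ → |((t₂ - s) ^ (α - 1) - (t₁ - s) ^ (α - 1)) * h s| ≤
      C * ((t₁ - s) ^ (α - 1) - (t₂ - s) ^ (α - 1)) := by
    filter_upwards [Measure.ae_ne volume t₁] with s hst hs
    have hpos : 0 < t₁ - s := by linarith [lt_of_le_of_ne hs.2 hst]
    have hmono : (t₂ - s) ^ (α - 1) ≤ (t₁ - s) ^ (α - 1) :=
      rpow_le_rpow_of_nonpos hpos (by linarith) (by linarith)
    rw [abs_mul, abs_of_nonpos (by linarith), neg_sub, mul_comm C]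
    exact mul_le_mul_of_nonneg_left (hC s (Ioc_subset_Icc_self hs)) (by linarith)
  have hC0 : 0 ≤ C := (abs_nonneg _).trans (hC 0 ⟨le_rfl, h0⟩)
  have hpow : t₁ ^ α ≤ t₂ ^ α := rpow_le_rpow h0 h12 hα0.le
  calc _ ≤ ∫ s in (0 : ℝ)..t₁, C * ((t₁ - s) ^ (α - 1) - (t₂ - s) ^ (α - 1)) := by
        simpa only [Real.norm_eq_abs] using norm_integral_le_of_norm_le
          (f := fun s => ((t₂ - s) ^ (α - 1) - (t₁ - s) ^ (α - 1)) * h s) h0 hbound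
          (((intervalIntegrable_sub_rpow hα0 t₁ 0 t₁).sub
            (intervalIntegrable_sub_rpow hα0 t₂ 0 t₁)).const_mul C)
    _ = C * ((t₁ ^ α - t₂ ^ α + (t₂ - t₁) ^ α) / α) := by
        rw [intervalIntegral.integral_const_mul, intervalIntegral.integral_sub
          (intervalIntegrable_sub_rpow hα0 t₁ 0 t₁) (intervalIntegrable_sub_rpow hα0 t₂ 0 t₁),
          integral_sub_rpow hα0, integral_sub_rpow hα0, sub_self, zero_rpow hα0.ne']
        ring_nf
    _ ≤ C * (t₂ - t₁) ^ α / α := by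
        rw [mul_div_assoc]
        gcongr
        linarith

theorem abs_riemannLiouville_le (hα : 0 < α) {t C : ℝ} (ht : 0 ≤ t)
    (hC : ∀ s ∈ Icc 0 t, |h s| ≤ C) :
    |riemannLiouville α h t| ≤ C * t ^ α / Gamma (α + 1) := by
  have hΓ := Gamma_pos_of_pos hα
  rw [riemannLiouville, abs_mul, abs_inv, abs_of_pos hΓ, Gamma_add_one hα.ne']
  calc (Gamma α)⁻¹ * |∫ s in (0 : ℝ)..t, (t - s) ^ (α - 1) * h s|
      ≤ (Gamma α)⁻¹ * (C * (t - 0) ^ α / α) :=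
        mul_le_mul_of_nonneg_left (abs_integral_sub_rpow_mul_le hα ht hC) (inv_nonneg.2 hΓ.le)
    _ = C * t ^ α / (α * Gamma α) := by
        rw [sub_zero]
        field_simp

theorem riemannLiouville_sub (hα : 0 < α) {h₁ h₂ : ℝ → ℝ} {t : ℝ} (ht : 0 ≤ t)
    (h₁c : ContinuousOn h₁ (Icc 0 t)) (h₂c : ContinuousOn h₂ (Icc 0 t)) :
    riemannLiouville α h₁ t - riemannLiouville α h₂ t = riemannLiouville α (h₁ - h₂) t := by
  simp only [riemannLiouville, Pi.sub_apply, mul_sub]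
  rw [intervalIntegral.integral_sub
    ((intervalIntegrable_sub_rpow hα t 0 t).mul_continuousOn (by rwa [uIcc_of_le ht]))
    ((intervalIntegrable_sub_rpow hα t 0 t).mul_continuousOn (by rwa [uIcc_of_le ht])), mul_sub]

theorem abs_riemannLiouville_sub_le (hα0 : 0 < α) (hα1 : α < 1) {t₁ t₂ C : ℝ}
    (h0 : 0 ≤ t₁) (h12 : t₁ ≤ t₂) (hh : ContinuousOn h (Icc 0 t₂))
    (hC : ∀ s ∈ Icc 0 t₂, |h s| ≤ C) :
    |riemannLiouville α h t₂ - riemannLiouville α h t₁| ≤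
      2 * C * (t₂ - t₁) ^ α / Gamma (α + 1) := by
  have hint : ∀ w {u v}, u ∈ Icc 0 t₂ → v ∈ Icc 0 t₂ →
      IntervalIntegrable (fun s => (w - s) ^ (α - 1) * h s) volume u v := fun w _ _ hu hv =>
    (intervalIntegrable_sub_rpow hα0 w _ _).mul_continuousOn (hh.mono (uIcc_subset_Icc hu hv))
  have h0' : 0 ∈ Icc 0 t₂ := ⟨le_rfl, h0.trans h12⟩
  have h1' : t₁ ∈ Icc 0 t₂ := ⟨h0, h12⟩
  have h2' : t₂ ∈ Icc 0 t₂ := ⟨h0.trans h12, le_rfl⟩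
  have hsplit : (∫ s in (0 : ℝ)..t₂, (t₂ - s) ^ (α - 1) * h s) -
        ∫ s in (0 : ℝ)..t₁, (t₁ - s) ^ (α - 1) * h s =
      (∫ s in (0 : ℝ)..t₁, ((t₂ - s) ^ (α - 1) - (t₁ - s) ^ (α - 1)) * h s) +
        ∫ s in t₁..t₂, (t₂ - s) ^ (α - 1) * h s := by
    rw [← integral_add_adjacent_intervals (hint t₂ h0' h1') (hint t₂ h1' h2')]
    simp only [sub_mul]
    rw [intervalIntegral.integral_sub (hint t₂ h0' h1') (hint t₁ h0' h1')]
    ring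
  have hΓ := Gamma_pos_of_pos hα0
  rw [riemannLiouville, riemannLiouville, ← mul_sub, abs_mul, abs_inv, abs_of_pos hΓ, hsplit,
    Gamma_add_one hα0.ne']
  calc (Gamma α)⁻¹ * |(∫ s in (0 : ℝ)..t₁, ((t₂ - s) ^ (α - 1) - (t₁ - s) ^ (α - 1)) * h s) +
        ∫ s in t₁..t₂, (t₂ - s) ^ (α - 1) * h s|
      ≤ (Gamma α)⁻¹ * (C * (t₂ - t₁) ^ α / α + C * (t₂ - t₁) ^ α / α) := by
        gcongr
        exact (abs_add_le _ _).trans (add_le_add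
          (abs_integral_sub_rpow_sub_mul_le hα0 hα1 h0 h12 fun s hs => hC s ⟨hs.1, hs.2.trans h12⟩)
          (abs_integral_sub_rpow_mul_le hα0 h12 fun s hs => hC s ⟨h0.trans hs.1, hs.2⟩))
    _ = 2 * C * (t₂ - t₁) ^ α / (α * Gamma α) := by
        field_simp
        ring

theorem continuousOn_riemannLiouville (hα0 : 0 < α) (hα1 : α < 1) {b : ℝ}
    (hh : ContinuousOn h (Icc 0 b)) : ContinuousOn (riemannLiouville α h) (Icc 0 b) := by
  obtain ⟨C, hC⟩ := isCompact_Icc.exists_bound_of_continuousOn hh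
  have hHolder : ∀ t ∈ Icc 0 b, ∀ t' ∈ Icc 0 b,
      dist (riemannLiouville α h t') (riemannLiouville α h t) ≤
        2 * C * |t' - t| ^ α / Gamma (α + 1) := by
    intro t ht t' ht'
    rw [Real.dist_eq]
    rcases le_total t t' with htt' | ht't
    · rw [abs_of_nonneg (sub_nonneg.2 htt')]
      exact abs_riemannLiouville_sub_le hα0 hα1 ht.1 htt' (hh.mono (Icc_subset_Icc_right ht'.2))
        fun s hs => hC s ⟨hs.1, hs.2.trans ht'.2⟩
    · rw [abs_sub_comm, abs_sub_comm t', abs_of_nonneg (sub_nonneg.2 ht't)]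
      exact abs_riemannLiouville_sub_le hα0 hα1 ht'.1 ht't (hh.mono (Icc_subset_Icc_right ht.2))
        fun s hs => hC s ⟨hs.1, hs.2.trans ht.2⟩
  intro t ht
  have hlim : Filter.Tendsto (fun t' => 2 * C * |t' - t| ^ α / Gamma (α + 1))
      (nhdsWithin t (Icc 0 b)) (nhds 0) := by
    have hcont : ContinuousAt (fun t' => 2 * C * |t' - t| ^ α / Gamma (α + 1)) t := by
      fun_prop (disch := exact Or.inr hα0.le)
    simpa [zero_rpow hα0.ne'] using hcont.tendsto.mono_left nhdsWithin_le_nhds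
  exact tendsto_iff_dist_tendsto_zero.2 (squeeze_zero' (.of_forall fun _ => dist_nonneg)
    (eventually_nhdsWithin_of_forall fun t' ht' => hHolder t ht t' ht') hlim)

end RiemannLiouville

section TerminalMap

variable {α lam ya a : ℝ} {g : ℝ → ℝ}

noncomputable def terminalMap (α lam ya a : ℝ) (g : ℝ → ℝ) (t : ℝ) : ℝ :=
  ya * exp (-lam * t) - exp (-lam * t) * (riemannLiouville α g a - riemannLiouville α g t)

theorem terminalMap_zero (t : ℝ) : terminalMap α lam ya a 0 t = ya * exp (-lam * t) := by
  simp [terminalMap, riemannLiouville]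

theorem terminalMap_exp_mul {t : ℝ} :
    terminalMap α lam ya a (fun s => exp (lam * s) * g s) t =
      ya * exp (-lam * t) - exp (-lam * t) / Gamma α *
        ((∫ s in (0 : ℝ)..a, exp (lam * s) * (a - s) ^ (α - 1) * g s) -
          ∫ s in (0 : ℝ)..t, exp (lam * s) * (t - s) ^ (α - 1) * g s) := by
  have hswap : ∀ c, (fun s => (c - s) ^ (α - 1) * (exp (lam * s) * g s)) =
      fun s => exp (lam * s) * (c - s) ^ (α - 1) * g s := fun c => funext fun s => by ring
  simp only [terminalMap, riemannLiouville, hswap]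
  ring

theorem continuousOn_terminalMap (hα0 : 0 < α) (hα1 : α < 1) (hg : ContinuousOn g (Icc 0 a)) :
    ContinuousOn (terminalMap α lam ya a g) (Icc 0 a) := by
  have hexp : Continuous fun t : ℝ => exp (-lam * t) := by fun_prop
  exact (continuousOn_const.mul hexp.continuousOn).sub (hexp.continuousOn.mul
    (continuousOn_const.sub (continuousOn_riemannLiouville hα0 hα1 hg)))

theorem abs_terminalMap_sub_le (hα : 0 < α) (hlam : 0 ≤ lam) {g₁ g₂ : ℝ → ℝ} {C t : ℝ}
    (hg₁ : ContinuousOn g₁ (Icc 0 a)) (hg₂ : ContinuousOn g₂ (Icc 0 a))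
    (hC : ∀ s ∈ Icc 0 a, |g₁ s - g₂ s| ≤ C) (ht : t ∈ Icc 0 a) :
    |terminalMap α lam ya a g₁ t - terminalMap α lam ya a g₂ t| ≤
      2 * C * a ^ α / Gamma (α + 1) := by
  have ha : 0 ≤ a := ht.1.trans ht.2
  have hCt : ∀ s ∈ Icc 0 t, |(g₁ - g₂) s| ≤ C := fun s hs => hC s ⟨hs.1, hs.2.trans ht.2⟩
  have hdiff : terminalMap α lam ya a g₁ t - terminalMap α lam ya a g₂ t =
      -(exp (-lam * t) * (riemannLiouville α (g₁ - g₂) a - riemannLiouville α (g₁ - g₂) t)) := by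
    rw [terminalMap, terminalMap, ← riemannLiouville_sub hα ha hg₁ hg₂,
      ← riemannLiouville_sub hα ht.1 (hg₁.mono (Icc_subset_Icc_right ht.2))
        (hg₂.mono (Icc_subset_Icc_right ht.2))]
    ring
  have hexp : exp (-lam * t) ≤ 1 := exp_le_one_iff.2 (by nlinarith [ht.1])
  have hpow : t ^ α ≤ a ^ α := rpow_le_rpow ht.1 ht.2 hα.le
  have hΓ : 0 < Gamma (α + 1) := Gamma_pos_of_pos (by linarith)
  rw [hdiff, abs_neg, abs_mul, abs_of_pos (exp_pos _)]
  calc exp (-lam * t) * |riemannLiouville α (g₁ - g₂) a - riemannLiouville α (g₁ - g₂) t|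
      ≤ 1 * (C * a ^ α / Gamma (α + 1) + C * t ^ α / Gamma (α + 1)) := by
        gcongr
        exact (abs_sub _ _).trans (add_le_add (abs_riemannLiouville_le hα ha hC)
          (abs_riemannLiouville_le hα ht.1 hCt))
    _ ≤ 2 * C * a ^ α / Gamma (α + 1) := by
        have hC0 : 0 ≤ C := (abs_nonneg _).trans (hC t ht)
        rw [one_mul, ← add_div]
        gcongr
        nlinarith

end TerminalMap

theorem exists_unique_fixedPoint_continuousOn_Icc {a b K : ℝ} (hab : a ≤ b) (hK0 : 0 ≤ K)
    (hK1 : K < 1) (T : (ℝ → ℝ) → ℝ → ℝ)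
    (hT_cont : ∀ y, ContinuousOn y (Icc a b) → ContinuousOn (T y) (Icc a b))
    (hT_lip : ∀ y z C, ContinuousOn y (Icc a b) → ContinuousOn z (Icc a b) →
      (∀ t ∈ Icc a b, |y t - z t| ≤ C) → ∀ t ∈ Icc a b, |T y t - T z t| ≤ K * C) :
    ∃ y, ContinuousOn y (Icc a b) ∧ EqOn (T y) y (Icc a b) ∧
      ∀ z, ContinuousOn z (Icc a b) → EqOn (T z) z (Icc a b) → EqOn z y (Icc a b) := by
  have hT_congr : ∀ y z, ContinuousOn y (Icc a b) → ContinuousOn z (Icc a b) →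
      EqOn y z (Icc a b) → EqOn (T y) (T z) (Icc a b) := fun y z hy hz hyz t ht => by
    have h := hT_lip y z 0 hy hz (fun s hs => by rw [hyz hs, sub_self, abs_zero]) t ht
    rwa [mul_zero, abs_nonpos_iff, sub_eq_zero] at h
  have hext : ∀ y : C(Icc a b, ℝ), ContinuousOn (IccExtend hab y) (Icc a b) := fun y =>
    y.continuous.Icc_extend'.continuousOn
  let F : C(Icc a b, ℝ) → C(Icc a b, ℝ) := fun y =>
    ⟨(Icc a b).domRestrict (T (IccExtend hab y)), (hT_cont _ (hext y)).domRestrict⟩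
  have hF : ContractingWith ⟨K, hK0⟩ F := by
    refine ⟨hK1, LipschitzWith.of_dist_le_mul fun y z => ?_⟩
    refine (ContinuousMap.dist_le (by positivity)).2 fun t => ?_
    refine hT_lip _ _ _ (hext y) (hext z) (fun s _ => ?_) t t.2
    rw [← Real.dist_eq]
    exact ContinuousMap.dist_apply_le_dist _
  set y₀ := ContractingWith.fixedPoint F hF
  have hy₀ : EqOn (T (IccExtend hab y₀)) (IccExtend hab y₀) (Icc a b) := fun t ht => by
    rw [IccExtend_of_mem hab _ ht]
    exact DFunLike.congr_fun hF.fixedPoint_isFixedPt ⟨t, ht⟩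
  refine ⟨IccExtend hab y₀, hext y₀, hy₀, fun z hz hTz => ?_⟩
  let zr : C(Icc a b, ℝ) := ⟨(Icc a b).domRestrict z, hz.domRestrict⟩
  have hzr : EqOn (IccExtend hab zr) z (Icc a b) := fun t ht => IccExtend_of_mem hab _ ht
  have hzr_fixed : F zr = zr := by
    ext t
    exact (hT_congr _ _ (hext zr) hz hzr t.2).trans (hTz t.2)
  intro t ht
  rw [IccExtend_of_mem hab _ ht]
  exact DFunLike.congr_fun (hF.fixedPoint_unique hzr_fixed) ⟨t, ht⟩

section ExpWeighted

variable {lam a L : ℝ} {f : ℝ → ℝ → ℝ} {y z : ℝ → ℝ}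

theorem continuousOn_exp_mul_comp (hf : Continuous fun p : ℝ × ℝ => f p.1 p.2) {S : Set ℝ}
    (hy : ContinuousOn y S) : ContinuousOn (fun s => exp (lam * s) * f s (y s)) S :=
  (continuous_exp.comp (continuous_const.mul continuous_id)).continuousOn.mul
    (hf.comp_continuousOn (continuousOn_id.prodMk hy))

theorem abs_exp_mul_le (hlam : 0 ≤ lam) {M : ℝ} (hM : ∀ t ∈ Icc (0 : ℝ) a, ∀ u, |f t u| ≤ M)
    {s : ℝ} (hs : s ∈ Icc 0 a) : |exp (lam * s) * f s (y s)| ≤ exp (lam * a) * M := by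
  rw [abs_mul, abs_of_pos (exp_pos _)]
  exact mul_le_mul (exp_le_exp.2 (mul_le_mul_of_nonneg_left hs.2 hlam)) (hM s hs _)
    (abs_nonneg _) (exp_pos _).le

theorem abs_exp_mul_sub_le (hlam : 0 ≤ lam)
    (hL : ∀ t ∈ Icc (0 : ℝ) a, ∀ u v, |f t u - f t v| ≤ L * |u - v|) {C s : ℝ}
    (hC : |y s - z s| ≤ C) (hs : s ∈ Icc 0 a) :
    |exp (lam * s) * f s (y s) - exp (lam * s) * f s (z s)| ≤ exp (lam * a) * L * C := by
  have hfC : |f s (y s) - f s (z s)| ≤ L * C := by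
    have hL0 : 0 ≤ L := by simpa using (abs_nonneg _).trans (hL s hs 0 1)
    exact (hL s hs _ _).trans (mul_le_mul_of_nonneg_left hC hL0)
  rw [← mul_sub, abs_mul, abs_of_pos (exp_pos _), mul_assoc]
  exact mul_le_mul (exp_le_exp.2 (mul_le_mul_of_nonneg_left hs.2 hlam)) hfC
    (abs_nonneg _) (exp_pos _).le

end ExpWeighted

/-- existence and uniqueness of a continuous solution in Ω_γ of the
terminal-value integral equation. -/
theorem terminal_value_integral_equation_unique_solution
    (α lam a ya M L : ℝ) (hα0 : 0 < α) (hα1 : α < 1) (hlam : 0 ≤ lam) (ha : 0 < a)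
    (f : ℝ → ℝ → ℝ) (hf : Continuous fun p : ℝ × ℝ => f p.1 p.2)
    (hM : ∀ t ∈ Set.Icc (0 : ℝ) a, ∀ u : ℝ, |f t u| ≤ M)
    (hL : ∀ t ∈ Set.Icc (0 : ℝ) a, ∀ u v : ℝ, |f t u - f t v| ≤ L * |u - v|)
    (hLsmall : L < Real.Gamma (α + 1) / (2 * a ^ α * Real.exp (lam * a))) :
    ∃ y : ℝ → ℝ,
      (ContinuousOn y (Set.Icc 0 a) ∧
        (∀ t ∈ Set.Icc (0 : ℝ) a,
          |y t - ya * Real.exp (-lam * t)| ≤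
            2 * a ^ α * M * Real.exp (lam * a) / Real.Gamma (1 + α)) ∧
        ∀ t ∈ Set.Icc (0 : ℝ) a,
          y t = ya * Real.exp (-lam * t) -
            (Real.exp (-lam * t) / Real.Gamma α) *
              ((∫ s in (0 : ℝ)..a, Real.exp (lam * s) * (a - s) ^ (α - 1) * f s (y s)) -
                ∫ s in (0 : ℝ)..t, Real.exp (lam * s) * (t - s) ^ (α - 1) * f s (y s))) ∧
      ∀ z : ℝ → ℝ,
        (ContinuousOn z (Set.Icc 0 a) ∧
          (∀ t ∈ Set.Icc (0 : ℝ) a,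
            |z t - ya * Real.exp (-lam * t)| ≤
              2 * a ^ α * M * Real.exp (lam * a) / Real.Gamma (1 + α)) ∧
          ∀ t ∈ Set.Icc (0 : ℝ) a,
            z t = ya * Real.exp (-lam * t) -
              (Real.exp (-lam * t) / Real.Gamma α) *
                ((∫ s in (0 : ℝ)..a, Real.exp (lam * s) * (a - s) ^ (α - 1) * f s (z s)) -
                  ∫ s in (0 : ℝ)..t, Real.exp (lam * s) * (t - s) ^ (α - 1) * f s (z s))) →
        Set.EqOn z y (Set.Icc 0 a) := by
  have hΓ : 0 < Gamma (α + 1) := Gamma_pos_of_pos (by linarith)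
  have hL0 : 0 ≤ L := by simpa using (abs_nonneg _).trans (hL 0 ⟨le_rfl, ha.le⟩ 0 1)
  have hK1 : 2 * (exp (lam * a) * L) * a ^ α / Gamma (α + 1) < 1 := by
    rw [div_lt_one hΓ]
    linarith [(lt_div_iff₀ (by positivity)).1 hLsmall]
  have hN := fun (y : ℝ → ℝ) (hy : ContinuousOn y (Icc 0 a)) =>
    continuousOn_exp_mul_comp (lam := lam) hf hy
  obtain ⟨y, hyc, hyfix, hyuniq⟩ := exists_unique_fixedPoint_continuousOn_Icc ha.le
    (by positivity) hK1 (fun y => terminalMap α lam ya a fun s => exp (lam * s) * f s (y s))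
    (fun y hy => continuousOn_terminalMap hα0 hα1 (hN y hy))
    (fun y z C hy hz hC t ht => (abs_terminalMap_sub_le hα0 hlam (hN y hy) (hN z hz)
      (fun s hs => abs_exp_mul_sub_le hlam hL (hC s hs) hs) ht).trans_eq (by ring))
  refine ⟨y, ⟨hyc, fun t ht => ?_, fun t ht => ?_⟩,
    fun z ⟨hzc, _, hzeq⟩ => hyuniq z hzc fun t ht => ?_⟩
  · rw [← hyfix ht, ← terminalMap_zero (α := α) (a := a) t, add_comm 1 α]
    refine (abs_terminalMap_sub_le (g₂ := 0) (C := exp (lam * a) * M) hα0 hlam (hN y hyc)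
      continuousOn_const (fun s hs => ?_) ht).trans_eq (by ring)
    simpa only [Pi.zero_apply, sub_zero] using abs_exp_mul_le hlam hM hs
  · exact (hyfix ht).symm.trans terminalMap_exp_mul
  · exact terminalMap_exp_mul.trans (hzeq t ht).symm
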